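/- arXiv:math/0703459 — 4 statements merged into one kernel-verified Lean document; each statement's English description precedes it below -/
import Mathlib

section
/- If Δ is an odd-cycle-free facet complex, then Δ satisfies the Helly property: every family of pairwise intersecting facets of Δ has nonempty total intersection. -/
/-! Take a minimal pairwise intersecting family `Γ` of facets with no common point. For each
`F ∈ Γ` the family `Γ \ {F}` has a common point `x_F`, necessarily outside `F`. Pairwise
intersection forces three distinct facets `F, G, H` in `Γ`, and then `x_H ∈ F ∩ G \ H`,
`x_F ∈ G ∩ H \ F`, `x_G ∈ H ∩ F \ G`: none of `F, G, H` is a leaf of `{F, G, H}`, which is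
therefore a cycle of odd length three. -/

variable {V : Type*} [DecidableEq V] [Fintype V]

/-- A facet complex: a finite set of subsets of the vertex set, none contained in another. -/
def IsFacetComplex (Δ : Finset (Finset V)) : Prop :=
  ∀ F ∈ Δ, ∀ G ∈ Δ, F ⊆ G → F = G

/-- `F` is a leaf of `Δ`. -/
def IsLeaf (Δ : Finset (Finset V)) (F : Finset V) : Prop :=
  F ∈ Δ ∧ (Δ = {F} ∨ ∃ G ∈ Δ.erase F, ∀ H ∈ Δ.erase F, H ∩ F ⊆ G)

/-- A forest: every nonempty subset has a leaf. -/
def IsForest (Δ : Finset (Finset V)) : Prop :=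
  ∀ Γ ⊆ Δ, Γ.Nonempty → ∃ F, IsLeaf Γ F

/-- A simplicial cycle: no leaf, but every nonempty proper subset has a leaf. -/
def IsCycle (Δ : Finset (Finset V)) : Prop :=
  Δ.Nonempty ∧ (¬ ∃ F, IsLeaf Δ F) ∧ ∀ Γ ⊂ Δ, Γ.Nonempty → ∃ F, IsLeaf Γ F

/-- Strong neighbors in `Δ`. -/
def StrongNeighbor (Δ : Finset (Finset V)) (F G : Finset V) : Prop :=
  F ≠ G ∧ ∀ H ∈ Δ, F ∩ G ⊆ H → H = F ∨ H = G

/-- Odd-cycle-free: no subset of odd cardinality is a cycle. -/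
def OddCycleFree (Δ : Finset (Finset V)) : Prop :=
  ∀ Γ ⊆ Δ, Odd Γ.card → ¬ IsCycle Γ

/-- Sizes of vertex covers of `Δ`. -/
def CoverSizes (Δ : Finset (Finset V)) : Set ℕ :=
  {n | ∃ A : Finset V, (∀ F ∈ Δ, ∃ x ∈ A, x ∈ F) ∧ A.card = n}

/-- Sizes of independent sets of facets of `Δ`. -/
def IndepSizes (Δ : Finset (Finset V)) : Set ℕ :=
  {n | ∃ B ⊆ Δ, (∀ F ∈ B, ∀ G ∈ B, F ≠ G → F ∩ G = ∅) ∧ B.card = n}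

/-- The line graph of a facet complex. -/
def lineGraph (Δ : Finset (Finset V)) : SimpleGraph {F // F ∈ Δ} where
  Adj F G := F ≠ G ∧ (F.1 ∩ G.1).Nonempty
  symm := ⟨fun _ _ h => ⟨h.1.symm, by rw [Finset.inter_comm]; exact h.2⟩⟩
  loopless := ⟨fun _ h => h.1 rfl⟩

/-- The cycle graph of length `n` on `ZMod n`. -/
def cycleGraph (n : ℕ) : SimpleGraph (ZMod n) where
  Adj i j := i ≠ j ∧ (j = i + 1 ∨ i = j + 1)
  symm := ⟨fun _ _ h => ⟨h.1.symm, h.2.symm⟩⟩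
  loopless := ⟨fun _ h => h.1 rfl⟩

/-- A special hyper-cycle of length `ℓ` in `Δ`. -/
def IsSpecialCycle (Δ : Finset (Finset V)) (ℓ : ℕ) : Prop :=
  ∃ (x : ZMod ℓ → V) (F : ZMod ℓ → Finset V),
    Function.Injective x ∧ Function.Injective F ∧ (∀ i, F i ∈ Δ) ∧
    ∀ i j, x i ∈ F j ↔ (j = i - 1 ∨ j = i)

/-- Balanced: no special hyper-cycle of odd length. -/
def IsBalanced (Δ : Finset (Finset V)) : Prop :=
  ∀ ℓ, 3 ≤ ℓ → Odd ℓ → ¬ IsSpecialCycle Δ ℓ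

section

variable {α : Type*} [DecidableEq α]

def IsTriangle (F G H : Finset α) : Prop :=
  ((F ∩ G) \ H).Nonempty ∧ ((G ∩ H) \ F).Nonempty ∧ ((H ∩ F) \ G).Nonempty

lemma exists_isLeaf_of_card_le_two {Γ : Finset (Finset α)} (hne : Γ.Nonempty)
    (hcard : Γ.card ≤ 2) : ∃ F, IsLeaf Γ F := by
  obtain ⟨F, hF⟩ := hne
  refine ⟨F, hF, ?_⟩
  obtain hone | ⟨G, hG⟩ := (Γ.erase F).eq_empty_or_nonempty
  · exact .inl ((Finset.erase_eq_empty_iff Γ F).mp hone |>.resolve_left (Finset.ne_empty_of_mem hF))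
  · have hle : (Γ.erase F).card ≤ 1 := by rw [Finset.card_erase_of_mem hF]; omega
    refine .inr ⟨G, hG, fun H hH => ?_⟩
    rw [Finset.card_le_one.mp hle H hH G hG]
    exact Finset.inter_subset_left

namespace IsTriangle

variable {F G H : Finset α}

lemma card_eq_three (h : IsTriangle F G H) : ({F, G, H} : Finset (Finset α)).card = 3 := by
  obtain ⟨⟨a, ha⟩, ⟨b, hb⟩, ⟨c, hc⟩⟩ := h
  simp only [Finset.mem_sdiff, Finset.mem_inter] at ha hb hc
  exact Finset.card_eq_three.mpr ⟨F, G, H, fun h => hc.2 (h ▸ hc.1.2),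
    fun h => hb.2 (h ▸ hb.1.2), fun h => ha.2 (h ▸ ha.1.2), rfl⟩

lemma not_isLeaf (h : IsTriangle F G H) (L : Finset α) : ¬ IsLeaf {F, G, H} L := by
  rintro ⟨hL, hsingle | ⟨J, hJ, hsub⟩⟩
  · simpa [hsingle] using h.card_eq_three
  obtain ⟨⟨a, ha⟩, ⟨b, hb⟩, ⟨c, hc⟩⟩ := h
  simp only [Finset.mem_sdiff, Finset.mem_inter] at ha hb hc
  simp only [Finset.mem_erase, Finset.mem_insert, Finset.mem_singleton] at hL hJ hsub
  -- the facet `K ∉ {L, J}` meets `L` in the triangle vertex outside `J`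
  have hK : ∀ K, K ≠ L → K = F ∨ K = G ∨ K = H → ∀ x ∈ K, x ∈ L → x ∈ J :=
    fun K hKL hK x hxK hxL => hsub K ⟨hKL, hK⟩ (Finset.mem_inter.mpr ⟨hxK, hxL⟩)
  have := hK F; have := hK G; have := hK H
  grind

lemma isCycle (h : IsTriangle F G H) : IsCycle {F, G, H} := by
  refine ⟨Finset.insert_nonempty _ _, fun ⟨L, hL⟩ => h.not_isLeaf L hL,
    fun Γ hΓ hne => exists_isLeaf_of_card_le_two hne ?_⟩
  have := Finset.card_lt_card hΓ
  rw [h.card_eq_three] at this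
  omega

end IsTriangle

lemma OddCycleFree.not_isTriangle {Δ : Finset (Finset α)} (hΔ : OddCycleFree Δ)
    {F G H : Finset α} (hF : F ∈ Δ) (hG : G ∈ Δ) (hH : H ∈ Δ) : ¬ IsTriangle F G H := fun h =>
  hΔ {F, G, H} (by simp [Finset.insert_subset_iff, hF, hG, hH])
    (h.card_eq_three ▸ odd_two_mul_add_one 1) h.isCycle

lemma exists_forall_mem_of_not_isTriangle {Γ : Finset (Finset α)} (hne : Γ.Nonempty)
    (hpair : ∀ F ∈ Γ, ∀ G ∈ Γ, (F ∩ G).Nonempty)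
    (htri : ∀ F ∈ Γ, ∀ G ∈ Γ, ∀ H ∈ Γ, ¬ IsTriangle F G H) : ∃ x, ∀ F ∈ Γ, x ∈ F := by
  induction Γ using Finset.strongInduction with
  | _ Γ ih =>
  by_contra! hcon
  have hout : ∀ F ∈ Γ, ∀ G ∈ Γ, G ≠ F → ∃ x ∉ F, ∀ K ∈ Γ, K ≠ F → x ∈ K := by
    intro F hF G hG hGF
    have sub {K} (hK : K ∈ Γ.erase F) : K ∈ Γ := Finset.mem_of_mem_erase hK
    obtain ⟨x, hx⟩ := ih (Γ.erase F) (Finset.erase_ssubset hF)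
      ⟨G, Finset.mem_erase_of_ne_of_mem hGF hG⟩ (fun A hA B hB => hpair A (sub hA) B (sub hB))
      (fun A hA B hB C hC => htri A (sub hA) B (sub hB) C (sub hC))
    have hxK : ∀ K ∈ Γ, K ≠ F → x ∈ K := fun K hK hKF => hx K (Finset.mem_erase_of_ne_of_mem hKF hK)
    obtain ⟨K, hK, hxK'⟩ := hcon x
    obtain rfl : K = F := by_contra fun hKF => hxK' (hxK K hK hKF)
    exact ⟨x, hxK', hxK⟩
  obtain ⟨F, hF⟩ := hne
  obtain ⟨y, hyF⟩ := (hpair F hF F hF).mono Finset.inter_subset_left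
  obtain ⟨G, hG, hyG⟩ := hcon y
  have hGF : G ≠ F := by rintro rfl; exact hyG hyF
  obtain ⟨z, hz⟩ := hpair F hF G hG
  obtain ⟨H, hH, hzH⟩ := hcon z
  rw [Finset.mem_inter] at hz
  have hHF : H ≠ F := by rintro rfl; exact hzH hz.1
  have hHG : H ≠ G := by rintro rfl; exact hzH hz.2
  obtain ⟨xF, hxF, hF'⟩ := hout F hF G hG hGF
  obtain ⟨xG, hxG, hG'⟩ := hout G hG F hF hGF.symm
  obtain ⟨xH, hxH, hH'⟩ := hout H hH F hF hHF.symm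
  refine htri F hF G hG H hH ⟨⟨xH, ?_⟩, ⟨xF, ?_⟩, ⟨xG, ?_⟩⟩ <;>
    simp only [Finset.mem_sdiff, Finset.mem_inter]
  · exact ⟨⟨hH' F hF hHF.symm, hH' G hG hHG.symm⟩, hxH⟩
  · exact ⟨⟨hF' G hG hGF, hF' H hH hHF⟩, hxF⟩
  · exact ⟨⟨hG' H hH hHG, hG' F hF hGF.symm⟩, hxG⟩

end

theorem oddCycleFree_helly_general (Δ : Finset (Finset V))
    (hocf : OddCycleFree Δ) :
    ∀ Γ ⊆ Δ, Γ.Nonempty → (∀ F ∈ Γ, ∀ G ∈ Γ, (F ∩ G).Nonempty) →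
      ∃ x, ∀ F ∈ Γ, x ∈ F := fun _ hΓ hne hpair =>
  exists_forall_mem_of_not_isTriangle hne hpair fun _ hF _ hG _ hH =>
    hocf.not_isTriangle (hΓ hF) (hΓ hG) (hΓ hH)

theorem oddCycleFree_helly (Δ : Finset (Finset V)) (hΔ : IsFacetComplex Δ)
    (hocf : OddCycleFree Δ) :
    ∀ Γ ⊆ Δ, Γ.Nonempty → (∀ F ∈ Γ, ∀ G ∈ Γ, (F ∩ G).Nonempty) →
      ∃ x, ∀ F ∈ Γ, x ∈ F :=
  oddCycleFree_helly_general Δ hocf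
end

section
/- If Δ is a facet complex whose line graph L(Δ) is a cycle graph of length ℓ > 3, then Δ is a simplicial cycle of length ℓ. -/
/-! Number the facets `F i`, `i : ZMod ℓ`, along the cycle, so that `F i` meets `F j` only for
`j = i - 1, i, i + 1`. No `F i` is a leaf of `Δ`: a witness `G` must contain a point of
`F i ∩ F (i + 1)` and one of `F i ∩ F (i - 1)`, so `G` meets `F (i - 1)`, `F i` and `F (i + 1)`,
which on a cycle of length at least 4 forces `G = F i`. In a proper subfamily `Γ`, pick
`F i ∈ Γ` with `F (i - 1) ∉ Γ`; the only facet of `Γ` that `F i` can meet is `F (i + 1)`, so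
`F i` is a leaf of `Γ`. -/

variable {V : Type*} [DecidableEq V] [Fintype V]

theorem ZMod.exists_mem_sub_one_notMem {n : ℕ} [NeZero n] {s : Set (ZMod n)} (hs : s.Nonempty)
    (hs' : s ≠ Set.univ) : ∃ i ∈ s, i - 1 ∉ s := by
  by_contra! hstep
  obtain ⟨i, hi⟩ := hs
  have hsub : ∀ k : ℕ, i - k ∈ s := by
    intro k
    induction k with
    | zero => simpa using hi
    | succ k ih => simpa [sub_add_eq_sub_sub] using hstep _ ih
  refine hs' (Set.eq_univ_of_forall fun j => ?_)
  simpa using hsub (i - j).val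

theorem ZMod.eq_of_near_sub_one_of_near_of_near_add_one {n : ℕ} (hn : 3 < n) {i j : ZMod n}
    (hprev : j = i - 1 - 1 ∨ j = i - 1 ∨ j = i - 1 + 1) (hcur : j = i - 1 ∨ j = i ∨ j = i + 1)
    (hnext : j = i + 1 - 1 ∨ j = i + 1 ∨ j = i + 1 + 1) : j = i := by
  have hk : ∀ k : ℕ, 0 < k → k < n → (k : ZMod n) ≠ 0 := fun k h0 hk hz =>
    absurd (Nat.le_of_dvd h0 ((ZMod.natCast_eq_zero_iff k n).mp hz)) (by omega)
  have h1 : (1 : ZMod n) ≠ 0 := by exact_mod_cast hk 1 (by omega) (by omega)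
  have h2 : (2 : ZMod n) ≠ 0 := by exact_mod_cast hk 2 (by omega) (by omega)
  have h3 : (3 : ZMod n) ≠ 0 := by exact_mod_cast hk 3 (by omega) (by omega)
  rcases hcur with rfl | rfl | rfl
  · rcases hnext with h | h | h
    exacts [(h1 (by linear_combination -h)).elim, (h2 (by linear_combination -h)).elim,
      (h3 (by linear_combination -h)).elim]
  · rfl
  · rcases hprev with h | h | h
    exacts [(h3 (by linear_combination h)).elim, (h2 (by linear_combination h)).elim,
      (h1 (by linear_combination h)).elim]

section LineGraph

variable {α : Type*} [DecidableEq α]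

theorem isLeaf_of_forall_inter_nonempty_eq {Γ : Finset (Finset α)} {F G : Finset α} (hF : F ∈ Γ)
    (h : ∀ H ∈ Γ.erase F, (H ∩ F).Nonempty → H = G) : IsLeaf Γ F := by
  refine ⟨hF, ?_⟩
  rcases (Γ.erase F).eq_empty_or_nonempty with hΓ | ⟨G', hG'⟩
  · exact .inl (((Finset.erase_eq_empty_iff _ _).mp hΓ).resolve_left (Finset.ne_empty_of_mem hF))
  -- If `G` is not in `Γ`, then `F` meets no other facet and any witness will do.
  refine .inr ⟨if G ∈ Γ.erase F then G else G', by split_ifs <;> assumption, fun H hH => ?_⟩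
  rcases (H ∩ F).eq_empty_or_nonempty with hHF | hHF
  · simp [hHF]
  · obtain rfl := h H hH hHF
    simp [hH]

variable {Δ : Finset (Finset α)} {n : ℕ}

theorem card_eq_of_lineGraph_iso_cycleGraph (e : lineGraph Δ ≃g cycleGraph n) : Δ.card = n := by
  simpa [Nat.card_eq_finsetCard] using Nat.card_congr e.toEquiv

theorem exists_symm_eq_of_mem (e : lineGraph Δ ≃g cycleGraph n) {A : Finset α} (hA : A ∈ Δ) :
    ∃ i, (e.symm i : Finset α) = A :=
  ⟨e ⟨A, hA⟩, by simp⟩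

theorem eq_sub_one_or_eq_or_eq_add_one_of_inter_nonempty (e : lineGraph Δ ≃g cycleGraph n)
    {i j : ZMod n} (h : ((e.symm i : Finset α) ∩ e.symm j).Nonempty) :
    j = i - 1 ∨ j = i ∨ j = i + 1 := by
  by_cases hij : i = j
  · exact .inr (.inl hij.symm)
  obtain ⟨-, hj | hi⟩ := e.symm.map_adj_iff.mp ⟨fun h' => hij (e.symm.injective h'), h⟩
  · exact .inr (.inr hj)
  · exact .inl (eq_sub_of_add_eq hi.symm)

theorem inter_add_one_nonempty (e : lineGraph Δ ≃g cycleGraph n) (hn : 1 < n) (i : ZMod n) :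
    ((e.symm i : Finset α) ∩ e.symm (i + 1)).Nonempty := by
  have : Fact (1 < n) := ⟨hn⟩
  exact (e.symm.map_adj_iff.mpr ⟨by simp, .inl rfl⟩).2

theorem not_isLeaf_of_lineGraph_iso_cycleGraph (e : lineGraph Δ ≃g cycleGraph n) (hn : 3 < n)
    (A : Finset α) : ¬ IsLeaf Δ A := by
  rintro ⟨hA, hsingle | ⟨G, hG, hleaf⟩⟩
  · have := card_eq_of_lineGraph_iso_cycleGraph e
    rw [hsingle, Finset.card_singleton] at this
    omega
  obtain ⟨i, rfl⟩ := exists_symm_eq_of_mem e hA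
  obtain ⟨hji, hGΔ⟩ := Finset.mem_erase.mp hG
  obtain ⟨j, rfl⟩ := exists_symm_eq_of_mem e hGΔ
  have : Fact (1 < n) := ⟨by omega⟩
  -- `G` contains every point that `F i` shares with another facet, in particular with `F (i ± 1)`.
  have through : ∀ k ≠ i, ((e.symm k : Finset α) ∩ e.symm i).Nonempty →
      ((e.symm k : Finset α) ∩ e.symm j).Nonempty ∧ ((e.symm i : Finset α) ∩ e.symm j).Nonempty := by
    rintro k hki ⟨x, hx⟩
    have hxj := hleaf _ (Finset.mem_erase.mpr ⟨by simpa using hki, (e.symm k).2⟩) hx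
    rw [Finset.mem_inter] at hx
    exact ⟨⟨x, Finset.mem_inter.mpr ⟨hx.1, hxj⟩⟩, ⟨x, Finset.mem_inter.mpr ⟨hx.2, hxj⟩⟩⟩
  obtain ⟨hnext, hcur⟩ := through (i + 1) (by simp)
    (by rw [Finset.inter_comm]; exact inter_add_one_nonempty e (by omega) i)
  obtain ⟨hprev, -⟩ := through (i - 1) (by simp)
    (by simpa using inter_add_one_nonempty e (by omega) (i - 1))
  refine hji (congrArg (fun k => (e.symm k : Finset α))
    (ZMod.eq_of_near_sub_one_of_near_of_near_add_one hn ?_ ?_ ?_))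
  exacts [eq_sub_one_or_eq_or_eq_add_one_of_inter_nonempty e hprev,
    eq_sub_one_or_eq_or_eq_add_one_of_inter_nonempty e hcur,
    eq_sub_one_or_eq_or_eq_add_one_of_inter_nonempty e hnext]

theorem exists_isLeaf_of_ssubset_of_lineGraph_iso_cycleGraph (e : lineGraph Δ ≃g cycleGraph n)
    {Γ : Finset (Finset α)} (hΓ : Γ ⊂ Δ) (hne : Γ.Nonempty) : ∃ F, IsLeaf Γ F := by
  have : NeZero n := ⟨by
    rw [← card_eq_of_lineGraph_iso_cycleGraph e]
    exact (hne.mono hΓ.subset).card_pos.ne'⟩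
  obtain ⟨i, hi, hprev⟩ := ZMod.exists_mem_sub_one_notMem (s := {k | (e.symm k : Finset α) ∈ Γ})
    (by
      obtain ⟨A, hA⟩ := hne
      obtain ⟨k, rfl⟩ := exists_symm_eq_of_mem e (hΓ.subset hA)
      exact ⟨k, hA⟩)
    (by
      obtain ⟨A, hAΔ, hAΓ⟩ := Finset.exists_of_ssubset hΓ
      obtain ⟨k, rfl⟩ := exists_symm_eq_of_mem e hAΔ
      exact fun h => hAΓ (Set.eq_univ_iff_forall.mp h k))
  -- Since `F (i - 1) ∉ Γ`, the only possible neighbour of `F i` in `Γ` is `F (i + 1)`.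
  refine ⟨_, isLeaf_of_forall_inter_nonempty_eq (G := e.symm (i + 1)) hi fun H hH hHi => ?_⟩
  obtain ⟨hHi', hHΓ⟩ := Finset.mem_erase.mp hH
  obtain ⟨k, rfl⟩ := exists_symm_eq_of_mem e (hΓ.subset hHΓ)
  rw [Finset.inter_comm] at hHi
  rcases eq_sub_one_or_eq_or_eq_add_one_of_inter_nonempty e hHi with rfl | rfl | rfl
  · exact absurd hHΓ hprev
  · exact absurd rfl hHi'
  · rfl

end LineGraph

theorem lineGraph_cycle_implies_cycle_general (Δ : Finset (Finset V))
    (ℓ : ℕ) (hl : 3 < ℓ) (iso : Nonempty (lineGraph Δ ≃g cycleGraph ℓ)) :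
    IsCycle Δ ∧ Δ.card = ℓ := by
  obtain ⟨e⟩ := iso
  have hcard := card_eq_of_lineGraph_iso_cycleGraph e
  refine ⟨⟨Finset.card_pos.mp (by omega), ?_, ?_⟩, hcard⟩
  · exact fun ⟨A, hA⟩ => not_isLeaf_of_lineGraph_iso_cycleGraph e hl A hA
  · exact fun Γ hΓ hne => exists_isLeaf_of_ssubset_of_lineGraph_iso_cycleGraph e hΓ hne

theorem lineGraph_cycle_implies_cycle (Δ : Finset (Finset V)) (hΔ : IsFacetComplex Δ)
    (ℓ : ℕ) (hl : 3 < ℓ) (iso : Nonempty (lineGraph Δ ≃g cycleGraph ℓ)) :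
    IsCycle Δ ∧ Δ.card = ℓ :=
  lineGraph_cycle_implies_cycle_general Δ ℓ hl iso
end

section
/- Every simplicial cycle of length ℓ gives rise to a special hyper-cycle of the same length: if F₁ ∼ F₂ ∼ ⋯ ∼ F_ℓ ∼ F₁ is a simplicial cycle with ∩ᵢ Fᵢ = ∅ and ℓ ≥ 3, then there exist distinct vertices x₁, …, x_ℓ with xᵢ ∈ Fⱼ if and only if j ≡ i−1 or i (mod ℓ). -/
variable {V : Type*} [DecidableEq V] [Fintype V]

/-!
Pick `x i ∈ F (i - 1) ∩ F i`, which is nonempty because `F (i - 1) ∼ F i` are strong neighbours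
and `F (i + 1)` is a third facet. If `x i` lay in any further facet `F j`, it would lie in two
facets whose intersection is `⋂ₖ F k = ∅`: for `j ≠ i + 1` take `F i ∩ F j`; for `j = i + 1` take
`F (i - 1) ∩ F (i + 1)` when `ℓ ≥ 4`, while for `ℓ = 3` the three facets are all of them.
Injectivity of `x` follows because `{i - 1, i}` determines `i` once `ℓ ≥ 3`.
-/

theorem ZMod.natCast_ne_zero_of_pos_of_lt {ℓ k : ℕ} (hk : 0 < k) (hkℓ : k < ℓ) :
    (k : ZMod ℓ) ≠ 0 := by
  rw [Ne, ZMod.natCast_eq_zero_iff]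
  exact Nat.not_dvd_of_pos_of_lt hk hkℓ

theorem ZMod.one_ne_zero_of_three_le {ℓ : ℕ} (hl : 3 ≤ ℓ) : (1 : ZMod ℓ) ≠ 0 := by
  exact_mod_cast ZMod.natCast_ne_zero_of_pos_of_lt (k := 1) one_pos (by omega)

theorem ZMod.two_ne_zero_of_three_le {ℓ : ℕ} (hl : 3 ≤ ℓ) : (2 : ZMod ℓ) ≠ 0 := by
  exact_mod_cast ZMod.natCast_ne_zero_of_pos_of_lt (k := 2) two_pos (by omega)

theorem ZMod.eq_sub_one_or_eq_or_eq_add_one_of_card_three (i k : ZMod 3) :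
    k = i - 1 ∨ k = i ∨ k = i + 1 := by
  decide +revert

theorem StrongNeighbor.inter_nonempty {α : Type*} [DecidableEq α] {Δ : Finset (Finset α)}
    {F G H : Finset α} (h : StrongNeighbor Δ F G) (hH : H ∈ Δ) (hHF : H ≠ F) (hHG : H ≠ G) :
    (F ∩ G).Nonempty := by
  rw [Finset.nonempty_iff_ne_empty]
  intro hempty
  rcases h.2 H hH (hempty ▸ Finset.empty_subset H) with h | h <;> contradiction

theorem injective_of_mem_iff_eq_sub_one_or_eq {α : Type*} {ℓ : ℕ} (hl : 3 ≤ ℓ)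
    {F : ZMod ℓ → Finset α} {x : ZMod ℓ → α} (hx : ∀ i j, x i ∈ F j ↔ (j = i - 1 ∨ j = i)) :
    Function.Injective x := by
  intro i j hij
  have hj : x i ∈ F j := hij ▸ (hx j j).mpr (Or.inr rfl)
  have hj_prev : x i ∈ F (j - 1) := hij ▸ (hx j (j - 1)).mpr (Or.inl rfl)
  rcases (hx i j).mp hj with rfl | h
  · exfalso
    rcases (hx i (i - 1 - 1)).mp hj_prev with h | h
    · exact ZMod.one_ne_zero_of_three_le hl (by linear_combination -h)
    · exact ZMod.two_ne_zero_of_three_le hl (by linear_combination -h)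
  · exact h.symm

section

variable {ℓ : ℕ} [NeZero ℓ] {F : ZMod ℓ → Finset V}

theorem mem_inf_of_mem_three_consecutive (hl : 3 ≤ ℓ)
    (hstruct : ∀ i j : ZMod ℓ, j ≠ i - 1 → j ≠ i → j ≠ i + 1 →
      F i ∩ F j = Finset.univ.inf F)
    {i : ZMod ℓ} {v : V} (hprev : v ∈ F (i - 1)) (hcur : v ∈ F i) (hnext : v ∈ F (i + 1)) :
    v ∈ Finset.univ.inf F := by
  by_cases h3 : (3 : ZMod ℓ) = 0
  · have hℓ : ℓ = 3 := by
      have hdvd : ℓ ∣ 3 := (ZMod.natCast_eq_zero_iff 3 ℓ).mp (by exact_mod_cast h3)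
      have := Nat.le_of_dvd (by norm_num) hdvd
      omega
    subst hℓ
    refine Finset.mem_inf.mpr fun k _ => ?_
    rcases ZMod.eq_sub_one_or_eq_or_eq_add_one_of_card_three i k with rfl | rfl | rfl <;>
      assumption
  · rw [← hstruct (i - 1) (i + 1)]
    · exact Finset.mem_inter.mpr ⟨hprev, hnext⟩
    · exact fun h => h3 (by linear_combination h)
    · exact fun h => ZMod.two_ne_zero_of_three_le hl (by linear_combination h)
    · exact fun h => ZMod.one_ne_zero_of_three_le hl (by linear_combination h)

theorem mem_iff_of_mem_inter_sub_one (hl : 3 ≤ ℓ)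
    (hstruct : ∀ i j : ZMod ℓ, j ≠ i - 1 → j ≠ i → j ≠ i + 1 →
      F i ∩ F j = Finset.univ.inf F)
    (htot : Finset.univ.inf F = ∅) {i : ZMod ℓ} {v : V} (hv : v ∈ F (i - 1) ∩ F i) (j : ZMod ℓ) :
    v ∈ F j ↔ (j = i - 1 ∨ j = i) := by
  obtain ⟨hprev, hcur⟩ := Finset.mem_inter.mp hv
  refine ⟨fun hj => ?_, by rintro (rfl | rfl) <;> assumption⟩
  by_contra! hne
  have hinf : v ∈ Finset.univ.inf F := by
    by_cases hnext : j = i + 1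
    · subst hnext
      exact mem_inf_of_mem_three_consecutive hl hstruct hprev hcur hj
    · exact hstruct i j hne.1 hne.2 hnext ▸ Finset.mem_inter.mpr ⟨hcur, hj⟩
  simp [htot] at hinf

end

theorem cycle_gives_special_hypercycle_general (ℓ : ℕ) [NeZero ℓ] (hl : 3 ≤ ℓ)
    (F : ZMod ℓ → Finset V) (hinj : Function.Injective F)
    (Δ : Finset (Finset V)) (hΔ : Δ = Finset.image F Finset.univ)
    (hsn : ∀ i, StrongNeighbor Δ (F i) (F (i + 1)))
    (hstruct : ∀ i j : ZMod ℓ, j ≠ i - 1 → j ≠ i → j ≠ i + 1 →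
      F i ∩ F j = Finset.univ.inf F)
    (htot : Finset.univ.inf F = ∅) :
    ∃ x : ZMod ℓ → V, Function.Injective x ∧
      ∀ i j, x i ∈ F j ↔ (j = i - 1 ∨ j = i) := by
  have hconsec : ∀ i, (F (i - 1) ∩ F i).Nonempty := by
    intro i
    have hnext : F (i + 1) ∈ Δ := hΔ ▸ Finset.mem_image_of_mem F (Finset.mem_univ _)
    have h := (hsn (i - 1)).inter_nonempty hnext (hinj.ne ?_) (hinj.ne ?_)
    · rwa [sub_add_cancel] at h
    · exact fun h => ZMod.two_ne_zero_of_three_le hl (by linear_combination h)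
    · exact fun h => ZMod.one_ne_zero_of_three_le hl (by linear_combination h)
  choose x hx using hconsec
  have hchar := fun i => mem_iff_of_mem_inter_sub_one hl hstruct htot (hx i)
  exact ⟨x, injective_of_mem_iff_eq_sub_one_or_eq hl hchar, hchar⟩

theorem cycle_gives_special_hypercycle (ℓ : ℕ) [NeZero ℓ] (hl : 3 ≤ ℓ)
    (F : ZMod ℓ → Finset V) (hinj : Function.Injective F)
    (Δ : Finset (Finset V)) (hΔ : Δ = Finset.image F Finset.univ)
    (hfc : IsFacetComplex Δ)
    (hsn : ∀ i, StrongNeighbor Δ (F i) (F (i + 1)))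
    (hstruct : ∀ i j : ZMod ℓ, j ≠ i - 1 → j ≠ i → j ≠ i + 1 →
      F i ∩ F j = Finset.univ.inf F)
    (htot : Finset.univ.inf F = ∅) :
    ∃ x : ZMod ℓ → V, Function.Injective x ∧
      ∀ i j, x i ∈ F j ↔ (j = i - 1 ∨ j = i) :=
  cycle_gives_special_hypercycle_general ℓ hl F hinj Δ hΔ hsn hstruct htot
end

section
/- Every balanced facet complex is odd-cycle-free: if Δ contains no special hyper-cycle of odd length, then no odd-cardinality subset of Δ is a simplicial cycle. -/
variable {V : Type*} [DecidableEq V] [Fintype V]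

/-!
In a simplicial cycle `Γ`, deleting a facet `F` leaves a forest, and a forest with at least two
facets has two leaves. Such a leaf `G` of `Γ \ {F}` is not a leaf of `Γ`, which forces `F` and `G`
to share a vertex lying in no other facet of `Γ`. So the graph on `Γ` joining two facets that
share such a private vertex has minimum degree two and contains a cycle. The facets on this cycle
form a leafless subcomplex, hence by minimality all of `Γ`, and the private vertices along the
cycle form a special hyper-cycle of length `|Γ|`.
-/

open Finset

theorem SimpleGraph.not_isAcyclic_of_forall_exists_two_adj {α : Type*} [Fintype α]
    [Nonempty α] {G : SimpleGraph α} (h : ∀ v, ∃ w₁ w₂, w₁ ≠ w₂ ∧ G.Adj v w₁ ∧ G.Adj v w₂) :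
    ¬ G.IsAcyclic := by
  intro hG
  have hfin : {n | ∃ (u v : α) (p : G.Walk u v), p.IsPath ∧ p.length = n}.Finite :=
    (Set.finite_Iio (Fintype.card α)).subset
      (by rintro _ ⟨u, v, p, hp, rfl⟩; exact hp.length_lt)
  obtain ⟨_, ⟨u, v, p, hp, rfl⟩, hmax⟩ := Set.exists_max_image _ id hfin
    ⟨0, Classical.arbitrary α, _, .nil, .nil, rfl⟩
  -- extend a longest path at its end `v`; acyclicity keeps the extension a path
  obtain ⟨w, hw, hwp⟩ : ∃ w, G.Adj v w ∧ w ≠ p.penultimate := by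
    obtain ⟨w₁, w₂, hne, h₁, h₂⟩ := h v
    by_cases hw₁ : w₁ = p.penultimate
    · exact ⟨w₂, h₂, hw₁ ▸ hne.symm⟩
    · exact ⟨w₁, h₁, hw₁⟩
  have hwp : w ∉ p.support := fun hs => hwp (hG.eq_penultimate_of_adj_end hp hw hs)
  have := hmax _ ⟨u, w, p.concat hw, hp.concat hwp hw, rfl⟩
  simp [SimpleGraph.Walk.length_concat] at this

theorem ZMod.add_one_ne_sub_one {n : ℕ} (hn : 3 ≤ n) (i : ZMod n) : i + 1 ≠ i - 1 := by
  intro h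
  have h2 : ((2 : ℕ) : ZMod n) = 0 := by
    rw [Nat.cast_ofNat]
    linear_combination h
  rw [ZMod.natCast_eq_zero_iff] at h2
  exact absurd (Nat.le_of_dvd two_pos h2) (by omega)

section

omit [DecidableEq V] [Fintype V]

variable {Γ C : Finset (Finset V)} {F G : Finset V}

def ExclusiveNeighbors (Γ : Finset (Finset V)) (F G : Finset V) : Prop :=
  F ≠ G ∧ ∃ x ∈ F, x ∈ G ∧ ∀ H ∈ Γ, x ∈ H → H = F ∨ H = G

theorem ExclusiveNeighbors.symm (h : ExclusiveNeighbors Γ F G) : ExclusiveNeighbors Γ G F := by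
  obtain ⟨hFG, x, hxF, hxG, hx⟩ := h
  exact ⟨hFG.symm, x, hxG, hxF, fun H hH hxH => (hx H hH hxH).symm⟩

theorem ExclusiveNeighbors.mono (h : ExclusiveNeighbors Γ F G) (hC : C ⊆ Γ) :
    ExclusiveNeighbors C F G := by
  obtain ⟨hFG, x, hxF, hxG, hx⟩ := h
  exact ⟨hFG, x, hxF, hxG, fun H hH => hx H (hC hH)⟩

def exclusiveGraph (Γ : Finset (Finset V)) : SimpleGraph {F // F ∈ Γ} where
  Adj F G := ExclusiveNeighbors Γ F G
  symm := ⟨fun _ _ h => h.symm⟩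
  loopless := ⟨fun _ h => h.1 rfl⟩

theorem exclusiveGraph_adj {F G : {F // F ∈ Γ}} :
    (exclusiveGraph Γ).Adj F G ↔ ExclusiveNeighbors Γ F G := Iff.rfl

theorem IsSpecialCycle.mono {Δ' : Finset (Finset V)} {n : ℕ} (h : IsSpecialCycle Γ n)
    (hΓ : Γ ⊆ Δ') : IsSpecialCycle Δ' n := by
  obtain ⟨x, S, hx, hS, hSΓ, hxS⟩ := h
  exact ⟨x, S, hx, hS, fun i => hΓ (hSΓ i), hxS⟩

theorem isSpecialCycle_of_cyclic_exclusiveNeighbors {n : ℕ} (hn : 3 ≤ n)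
    {S : ZMod n → Finset V} (hS : Function.Injective S) (hSΓ : ∀ i, S i ∈ Γ)
    (hadj : ∀ i, ExclusiveNeighbors Γ (S i) (S (i + 1))) : IsSpecialCycle Γ n := by
  have hx : ∀ i, ∃ x, ∀ j, x ∈ S j ↔ j = i ∨ j = i + 1 := by
    intro i
    obtain ⟨-, x, hxi, hxi₁, hx⟩ := hadj i
    refine ⟨x, fun j => ⟨fun hxj => (hx (S j) (hSΓ j) hxj).imp hS.eq_iff.1 hS.eq_iff.1, ?_⟩⟩
    rintro (rfl | rfl)
    exacts [hxi, hxi₁]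
  choose y hy using hx
  -- `y k = y l` forces `{k, k + 1} = {l, l + 1}`, impossible for `k ≠ l` once `n ≥ 3`
  have hy_inj : Function.Injective y := by
    intro k l hkl
    have hk : k = l ∨ k = l + 1 := (hy l k).1 (hkl ▸ (hy k k).2 (Or.inl rfl))
    have hl : l = k ∨ l = k + 1 := (hy k l).1 (hkl ▸ (hy l l).2 (Or.inl rfl))
    rcases hk with hk | hk
    · exact hk
    rcases hl with hl | hl
    · exact hl.symm
    exact absurd (hl.symm.trans (eq_sub_of_add_eq hk.symm)) (ZMod.add_one_ne_sub_one hn k)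
  refine ⟨fun i => y (i - 1), S, fun i j hij => sub_left_injective (hy_inj hij), hS, hSΓ,
    fun i j => ?_⟩
  simpa only [sub_add_cancel] using hy (i - 1) j

end

section

omit [Fintype V]

variable {Γ C : Finset (Finset V)} {F G K : Finset V}

/-- `G` is a joint of the leaf `F` of `Γ`. -/
def IsJoint (Γ : Finset (Finset V)) (F G : Finset V) : Prop :=
  F ∈ Γ ∧ G ∈ Γ.erase F ∧ ∀ H ∈ Γ.erase F, H ∩ F ⊆ G

theorem IsJoint.isLeaf (h : IsJoint Γ F G) : IsLeaf Γ F := ⟨h.1, Or.inr ⟨G, h.2⟩⟩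

theorem IsLeaf.exists_isJoint (h : IsLeaf Γ F) (hΓ : 2 ≤ Γ.card) : ∃ G, IsJoint Γ F G := by
  obtain ⟨hF, rfl | hG⟩ := h
  · simp at hΓ
  · exact hG.imp fun _ hG => ⟨hF, hG⟩

theorem isJoint_pair (h : F ≠ G) : IsJoint {F, G} F G := by
  refine ⟨mem_insert_self F {G}, by simp [h.symm], fun H hH => ?_⟩
  obtain rfl : H = G := by simpa [(ne_of_mem_erase hH)] using mem_of_mem_erase hH
  exact inter_subset_left

theorem IsJoint.of_erase {L J : Finset V} (hL : IsJoint (Γ.erase F) L J) (hF : IsJoint Γ F K)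
    (hLK : L ≠ K) : IsJoint Γ L J := by
  obtain ⟨hLmem, hJ, hLjoint⟩ := hL
  obtain ⟨-, hK, hFjoint⟩ := hF
  refine ⟨mem_of_mem_erase hLmem, mem_erase.2 ⟨ne_of_mem_erase hJ,
    mem_of_mem_erase (mem_of_mem_erase hJ)⟩, fun H hH => ?_⟩
  by_cases hHF : H = F
  · subst hHF
    have hLH : L ∩ H ⊆ K :=
      hFjoint L (mem_erase.2 ⟨ne_of_mem_erase hLmem, mem_of_mem_erase hLmem⟩)
    have hKL : K ∩ L ⊆ J := hLjoint K (mem_erase.2 ⟨hLK.symm, hK⟩)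
    intro x hx
    rw [mem_inter] at hx
    exact hKL (mem_inter.2 ⟨hLH (mem_inter.2 ⟨hx.2, hx.1⟩), hx.2⟩)
  · exact hLjoint H
      (mem_erase.2 ⟨ne_of_mem_erase hH, mem_erase.2 ⟨hHF, mem_of_mem_erase hH⟩⟩)

theorem IsForest.mono (h : IsForest Γ) (hC : C ⊆ Γ) : IsForest C :=
  fun D hD hne => h D (hD.trans hC) hne

theorem IsForest.exists_two_isJoint (h : IsForest Γ) (hΓ : 2 ≤ Γ.card) :
    ∃ F₁ G₁ F₂ G₂, F₁ ≠ F₂ ∧ IsJoint Γ F₁ G₁ ∧ IsJoint Γ F₂ G₂ := by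
  induction Γ using Finset.strongInduction with
  | H Γ ih =>
    obtain hΓ2 | hΓ3 := hΓ.eq_or_lt
    · obtain ⟨F, G, hFG, rfl⟩ := card_eq_two.1 hΓ2.symm
      exact ⟨F, G, G, F, hFG, isJoint_pair hFG, pair_comm F G ▸ isJoint_pair hFG.symm⟩
    obtain ⟨F, hF⟩ := h Γ Subset.rfl (card_pos.1 (by omega))
    obtain ⟨K, hK⟩ := hF.exists_isJoint hΓ
    obtain ⟨L₁, J₁, L₂, J₂, hL, h₁, h₂⟩ := ih (Γ.erase F) (erase_ssubset hK.1)
      (h.mono (erase_subset F Γ)) (by rw [card_erase_of_mem hK.1]; omega)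
    -- a leaf of `Γ.erase F` other than the joint `K` of `F` is still a leaf of `Γ`
    obtain ⟨L, J, hLK, hLJ⟩ : ∃ L J, L ≠ K ∧ IsJoint (Γ.erase F) L J := by
      by_cases h₁K : L₁ = K
      · exact ⟨L₂, J₂, h₁K ▸ hL.symm, h₂⟩
      · exact ⟨L₁, J₁, h₁K, h₁⟩
    exact ⟨F, K, L, J, (ne_of_mem_erase hLJ.1).symm, hK, hLJ.of_erase hK hLK⟩

theorem exclusiveNeighbors_of_isJoint_erase (hΓ : ¬∃ F, IsLeaf Γ F)
    (hG : IsJoint (Γ.erase F) G K) : ExclusiveNeighbors Γ F G := by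
  obtain ⟨hG, hK, hjoint⟩ := hG
  -- `K` cannot be a joint of `G` in `Γ`, and only `F` can witness this
  obtain ⟨H, hH, hHG⟩ : ∃ H ∈ Γ.erase G, ¬ H ∩ G ⊆ K := by
    by_contra! hGK
    exact hΓ ⟨G, IsJoint.isLeaf ⟨mem_of_mem_erase hG, mem_erase.2 ⟨ne_of_mem_erase hK,
      mem_of_mem_erase (mem_of_mem_erase hK)⟩, hGK⟩⟩
  obtain rfl : H = F := by
    by_contra hHF
    exact hHG (hjoint H
      (mem_erase.2 ⟨ne_of_mem_erase hH, mem_erase.2 ⟨hHF, mem_of_mem_erase hH⟩⟩))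
  obtain ⟨x, hx, hxK⟩ := not_subset.1 hHG
  rw [mem_inter] at hx
  refine ⟨(ne_of_mem_erase hG).symm, x, hx.1, hx.2, fun H' hH' hxH' => ?_⟩
  by_contra! hne
  exact hxK (hjoint H' (mem_erase.2 ⟨hne.2, mem_erase.2 ⟨hne.1, hH'⟩⟩)
    (mem_inter.2 ⟨hxH', hx.2⟩))

theorem not_exists_isLeaf_of_forall_two_exclusiveNeighbors
    (h : ∀ F ∈ C, ∃ G₁ ∈ C, ∃ G₂ ∈ C,
      G₁ ≠ G₂ ∧ ExclusiveNeighbors C F G₁ ∧ ExclusiveNeighbors C F G₂) :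
    ¬∃ F, IsLeaf C F := by
  rintro ⟨F, hF, hC | ⟨J, hJ, hjoint⟩⟩
  · obtain ⟨G, hG, -, -, -, hFG, -⟩ := h F hF
    rw [hC, mem_singleton] at hG
    exact hFG.1 hG.symm
  have hJ_eq : ∀ G ∈ C, ExclusiveNeighbors C F G → J = G := by
    rintro G hG ⟨hFG, x, hxF, hxG, hx⟩
    have hxJ : x ∈ J := hjoint G (mem_erase.2 ⟨hFG.symm, hG⟩) (mem_inter.2 ⟨hxG, hxF⟩)
    exact (hx J (mem_of_mem_erase hJ) hxJ).resolve_left (ne_of_mem_erase hJ)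
  obtain ⟨G₁, hG₁, G₂, hG₂, hne, h₁, h₂⟩ := h F hF
  exact hne ((hJ_eq G₁ hG₁ h₁).symm.trans (hJ_eq G₂ hG₂ h₂))

theorem IsCycle.three_le_card (h : IsCycle Γ) : 3 ≤ Γ.card := by
  obtain ⟨hne, hleaf, -⟩ := h
  have h1 : Γ.card ≠ 1 := by
    intro h1
    obtain ⟨F, rfl⟩ := card_eq_one.1 h1
    exact hleaf ⟨F, mem_singleton_self F, Or.inl rfl⟩
  have h2 : Γ.card ≠ 2 := by
    intro h2
    obtain ⟨F, G, hFG, rfl⟩ := card_eq_two.1 h2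
    exact hleaf ⟨F, (isJoint_pair hFG).isLeaf⟩
  have := card_pos.2 hne
  omega

theorem IsCycle.isForest_erase (h : IsCycle Γ) (hF : F ∈ Γ) : IsForest (Γ.erase F) :=
  fun C hC hne => h.2.2 C (hC.trans_ssubset (erase_ssubset hF)) hne

theorem IsCycle.eq_of_subset (h : IsCycle Γ) (hC : C ⊆ Γ) (hne : C.Nonempty)
    (hleaf : ¬∃ F, IsLeaf C F) : C = Γ := by
  by_contra hCΓ
  exact hleaf (h.2.2 C (hC.ssubset_of_ne hCΓ) hne)

theorem IsCycle.exists_two_exclusiveNeighbors (h : IsCycle Γ) (hF : F ∈ Γ) :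
    ∃ G₁ ∈ Γ, ∃ G₂ ∈ Γ, G₁ ≠ G₂ ∧ ExclusiveNeighbors Γ F G₁ ∧ ExclusiveNeighbors Γ F G₂ := by
  obtain ⟨G₁, K₁, G₂, K₂, hne, h₁, h₂⟩ := (h.isForest_erase hF).exists_two_isJoint
    (by have := h.three_le_card; rw [card_erase_of_mem hF]; omega)
  exact ⟨G₁, mem_of_mem_erase h₁.1, G₂, mem_of_mem_erase h₂.1, hne,
    exclusiveNeighbors_of_isJoint_erase h.2.1 h₁,
    exclusiveNeighbors_of_isJoint_erase h.2.1 h₂⟩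

theorem IsCycle.exists_cyclic_exclusiveNeighbors (h : IsCycle Γ) :
    ∃ n ≥ 3, ∃ S : ZMod n → Finset V, Function.Injective S ∧ (∀ i, S i ∈ Γ) ∧
      ∀ i, ExclusiveNeighbors Γ (S i) (S (i + 1)) := by
  have : Nonempty {F // F ∈ Γ} := h.1.to_subtype
  have hcyc : ¬ (exclusiveGraph Γ).IsAcyclic :=
    SimpleGraph.not_isAcyclic_of_forall_exists_two_adj fun F => by
      obtain ⟨G₁, hG₁, G₂, hG₂, hne, h₁, h₂⟩ := h.exists_two_exclusiveNeighbors F.2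
      exact ⟨⟨G₁, hG₁⟩, ⟨G₂, hG₂⟩, fun e => hne (congrArg Subtype.val e),
        exclusiveGraph_adj.2 h₁, exclusiveGraph_adj.2 h₂⟩
  obtain ⟨n, hn, ⟨f⟩⟩ :
      ∃ n ≥ 3, (SimpleGraph.cycleGraph n).IsContained (exclusiveGraph Γ) := by
    simpa [SimpleGraph.isAcyclic_iff_free_cycleGraph] using hcyc
  -- `ZMod (m + 3)` is `Fin (m + 3)` by definition, with the same arithmetic
  obtain ⟨m, rfl⟩ : ∃ m, n = m + 3 := ⟨n - 3, by omega⟩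
  refine ⟨m + 3, hn, fun i => (f i).1, Subtype.val_injective.comp f.injective,
    fun i => (f i).2, fun i => ?_⟩
  exact f.toHom.map_adj (SimpleGraph.cycleGraph_adj.2 (Or.inr (add_sub_cancel_left i 1)))

theorem IsCycle.card_eq_of_cyclic_exclusiveNeighbors (h : IsCycle Γ) {n : ℕ} (hn : 3 ≤ n)
    {S : ZMod n → Finset V} (hS : Function.Injective S) (hSΓ : ∀ i, S i ∈ Γ)
    (hadj : ∀ i, ExclusiveNeighbors Γ (S i) (S (i + 1))) : Γ.card = n := by
  have : NeZero n := ⟨by omega⟩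
  have hsub : univ.image S ⊆ Γ := image_subset_iff.2 fun i _ => hSΓ i
  have hleaf : ¬∃ F, IsLeaf (univ.image S) F := by
    refine not_exists_isLeaf_of_forall_two_exclusiveNeighbors ?_
    simp only [mem_image, mem_univ, true_and, forall_exists_index, forall_apply_eq_imp_iff,
      exists_exists_eq_and]
    intro i
    refine ⟨i + 1, i - 1, fun e => ZMod.add_one_ne_sub_one hn i (hS e),
      (hadj i).mono hsub, ?_⟩
    simpa only [sub_add_cancel] using ((hadj (i - 1)).mono hsub).symm
  rw [← h.eq_of_subset hsub (univ_nonempty.image S) hleaf, card_image_of_injective _ hS,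
    card_univ, ZMod.card]

end

theorem balanced_is_oddCycleFree_general (Δ : Finset (Finset V))
    (hbal : IsBalanced Δ) : ∀ Γ ⊆ Δ, Odd Γ.card → ¬ IsCycle Γ := by
  intro Γ hΓΔ hodd hcyc
  obtain ⟨n, hn, S, hS, hSΓ, hadj⟩ := hcyc.exists_cyclic_exclusiveNeighbors
  have hcard : Γ.card = n := hcyc.card_eq_of_cyclic_exclusiveNeighbors hn hS hSΓ hadj
  exact hbal n hn (hcard ▸ hodd)
    ((isSpecialCycle_of_cyclic_exclusiveNeighbors hn hS hSΓ hadj).mono hΓΔ)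

theorem balanced_is_oddCycleFree (Δ : Finset (Finset V)) (hfc : IsFacetComplex Δ)
    (hbal : IsBalanced Δ) : ∀ Γ ⊆ Δ, Odd Γ.card → ¬ IsCycle Γ :=
  balanced_is_oddCycleFree_general Δ hbal
end
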